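/- If A is entrywise nonnegative and ω > 0 with all eigenvalues of A of modulus less than ω, then Ψ(t) = e^{(A-ωI)t} + ω (A-ωI)⁻¹ (e^{(A-ωI)t} − I) is entrywise nonnegative for every t ≥ 0. -/

import Mathlib

/-!
Write `B = A - ωI`. Since `ω` is not an eigenvalue of `A`, `B` is invertible, and
`Ψ(t) = e^{tB} + ω B⁻¹ (e^{tB} - I)`. Because `ωI` commutes with `A`, `e^{tB} = e^{-ωt} e^{tA}`,
which is entrywise nonnegative for `t ≥ 0` as a power series in `tA`. The second term
`Φ(t) = B⁻¹ (e^{tB} - I)` vanishes at `0` and has derivative `e^{tB}`, so each entry of `Φ` is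
nondecreasing on `[0, ∞)` and hence nonnegative there.
-/

open NormedSpace

theorem nonneg_of_hasDerivAt_of_nonneg {f f' : ℝ → ℝ} (h₀ : f 0 = 0)
    (hf : ∀ u, HasDerivAt f (f' u) u) (hf' : ∀ u, 0 ≤ u → 0 ≤ f' u) {t : ℝ} (ht : 0 ≤ t) :
    0 ≤ f t := by
  have hmono : MonotoneOn f (Set.Ici 0) :=
    monotoneOn_of_hasDerivWithinAt_nonneg (convex_Ici 0)
      (fun u _ => (hf u).continuousAt.continuousWithinAt) (fun u _ => (hf u).hasDerivWithinAt)
      (fun u hu => hf' u (interior_subset hu))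
  simpa [h₀] using hmono Set.self_mem_Ici ht ht

namespace Matrix

variable {n : Type*} [Fintype n] [DecidableEq n]

theorem map_mem_spectrum_map_iff {K L : Type*} [Field K] [Field L] (f : K →+* L)
    (A : Matrix n n K) (r : K) : f r ∈ spectrum L (A.map f) ↔ r ∈ spectrum K A := by
  simp only [mem_spectrum_iff_isRoot_charpoly, charpoly_map, Polynomial.IsRoot.def,
    Polynomial.eval_map_apply, map_eq_zero]

theorem isUnit_sub_smul_one_of_ofReal_notMem_spectrum {A : Matrix n n ℝ} {r : ℝ}
    (h : (r : ℂ) ∉ spectrum ℂ (A.map Complex.ofReal)) : IsUnit (A - r • 1) := by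
  change Complex.ofRealHom r ∉ spectrum ℂ (A.map Complex.ofRealHom) at h
  rwa [map_mem_spectrum_map_iff, spectrum.notMem_iff, IsUnit.sub_iff,
    Algebra.algebraMap_eq_smul_one] at h

open scoped Norms.Operator

theorem exp_apply_nonneg {M : Matrix n n ℝ} (hM : ∀ i j, 0 ≤ M i j) (i j : n) :
    0 ≤ exp M i j :=
  (Pi.hasSum.mp (Pi.hasSum.mp (exp_series_hasSum_exp' (𝕂 := ℝ) M) i) j).nonneg fun k =>
    mul_nonneg (by positivity) (pow_apply_nonneg hM k i j)

theorem exp_sub_smul_one (M : Matrix n n ℝ) (c : ℝ) :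
    exp (M - c • 1) = Real.exp (-c) • exp M := by
  have hcomm : Commute M ((-c) • (1 : Matrix n n ℝ)) := (Commute.one_right M).smul_right _
  have hscalar : exp ((-c) • (1 : Matrix n n ℝ)) = Real.exp (-c) • 1 := by
    have h := (algebraMap_exp_comm (𝔸 := Matrix n n ℝ) (-c)).symm
    rw [Algebra.algebraMap_eq_smul_one, Algebra.algebraMap_eq_smul_one] at h
    rwa [Real.exp_eq_exp_ℝ]
  rw [sub_eq_add_neg, ← neg_smul, exp_add_of_commute _ _ hcomm, hscalar, mul_smul_comm, mul_one]

theorem exp_smul_sub_smul_one_apply_nonneg {A : Matrix n n ℝ} (hA : ∀ i j, 0 ≤ A i j)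
    (ω : ℝ) {t : ℝ} (ht : 0 ≤ t) (i j : n) : 0 ≤ exp (t • (A - ω • 1)) i j := by
  rw [smul_sub, smul_smul, exp_sub_smul_one, smul_apply, smul_eq_mul]
  exact mul_nonneg (Real.exp_pos _).le (exp_apply_nonneg (fun i j => mul_nonneg ht (hA i j)) i j)

theorem hasDerivAt_inv_mul_exp_smul_sub_one_apply {B : Matrix n n ℝ} (hB : IsUnit B)
    (i j : n) (t : ℝ) :
    HasDerivAt (fun u : ℝ => (B⁻¹ * (exp (u • B) - 1)) i j) (exp (t • B) i j) t := by
  have h := ((hasDerivAt_exp_smul_const' (𝕂 := ℝ) B t).sub_const 1).const_mul B⁻¹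
  rw [← mul_assoc, nonsing_inv_mul _ ((isUnit_iff_isUnit_det B).mp hB), one_mul] at h
  exact ((entryLinearMap ℝ ℝ i j).toContinuousLinearMap.hasFDerivAt.comp_hasDerivAt t h :)

theorem inv_mul_exp_smul_sub_one_apply_nonneg {B : Matrix n n ℝ} (hB : IsUnit B)
    (hexp : ∀ u : ℝ, 0 ≤ u → ∀ i j, 0 ≤ exp (u • B) i j) {t : ℝ} (ht : 0 ≤ t) (i j : n) :
    0 ≤ (B⁻¹ * (exp (t • B) - 1)) i j :=
  nonneg_of_hasDerivAt_of_nonneg (by simp) (hasDerivAt_inv_mul_exp_smul_sub_one_apply hB i j)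
    (fun u hu => hexp u hu i j) ht

end Matrix

/-- If `A` is entrywise nonnegative and all its complex eigenvalues have
modulus `< ω`, then `Ψ(t) = e^{(A-ωI)t} + ω (A-ωI)⁻¹ (e^{(A-ωI)t} - I)` is entrywise
nonnegative for every `t ≥ 0`. -/
theorem psi_nonneg (m : ℕ) (A : Matrix (Fin m) (Fin m) ℝ) (ω : ℝ) (hω : 0 < ω)
    (hA : ∀ i j : Fin m, 0 ≤ A i j)
    (hspec : ∀ μ : ℂ, μ ∈ spectrum ℂ (A.map Complex.ofReal) → ‖μ‖ < ω) :
    ∀ t : ℝ, 0 ≤ t → ∀ i j : Fin m,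
      0 ≤ (NormedSpace.exp (t • (A - ω • (1 : Matrix (Fin m) (Fin m) ℝ))) +
            ω • (A - ω • (1 : Matrix (Fin m) (Fin m) ℝ))⁻¹ *
              (NormedSpace.exp (t • (A - ω • 1)) - 1)) i j := by
  intro t ht i j
  have hω_notMem : (ω : ℂ) ∉ spectrum ℂ (A.map Complex.ofReal) := fun h => by
    simpa [abs_of_pos hω] using hspec _ h
  have hexp := fun (u : ℝ) (hu : 0 ≤ u) => Matrix.exp_smul_sub_smul_one_apply_nonneg hA ω hu
  rw [Matrix.add_apply, Matrix.smul_mul, Matrix.smul_apply, smul_eq_mul]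
  exact add_nonneg (hexp t ht i j) <| mul_nonneg hω.le <|
    Matrix.inv_mul_exp_smul_sub_one_apply_nonneg
      (Matrix.isUnit_sub_smul_one_of_ofReal_notMem_spectrum hω_notMem) hexp ht i j
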